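/- arXiv:2510.14609 — 4 statements merged into one kernel-verified Lean document; each statement's English description precedes it below -/
import Mathlib

section
/- Let x₁, x₂, x₃, y₁, y₂, y₃ be nonnegative reals with yᵢ ≤ xᵢ for i = 1, 2, 3. If x₁ + x₂ + x₃ < 1 and (x₁ + x₂ + x₃ − 1)² ≥ 4·x₁·x₂·x₃, then y₁ + y₂ + y₃ < 1 and (y₁ + y₂ + y₃ − 1)² ≥ 4·y₁·y₂·y₃. -/
theorem antidistinguishability_conditions_monotone
    (x₁ x₂ x₃ y₁ y₂ y₃ : ℝ)
    (hx₁ : 0 ≤ x₁) (hx₂ : 0 ≤ x₂) (hx₃ : 0 ≤ x₃)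
    (hy₁ : 0 ≤ y₁) (hy₂ : 0 ≤ y₂) (hy₃ : 0 ≤ y₃)
    (h₁ : y₁ ≤ x₁) (h₂ : y₂ ≤ x₂) (h₃ : y₃ ≤ x₃)
    (hsum : x₁ + x₂ + x₃ < 1)
    (hprod : (x₁ + x₂ + x₃ - 1) ^ 2 ≥ 4 * x₁ * x₂ * x₃) :
    y₁ + y₂ + y₃ < 1 ∧ (y₁ + y₂ + y₃ - 1) ^ 2 ≥ 4 * y₁ * y₂ * y₃ := by
  constructor
  · linarith
  · have hyy : y₁ * y₂ * y₃ ≤ x₁ * x₂ * x₃ :=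
      mul_le_mul (mul_le_mul h₁ h₂ hy₂ hx₁) h₃ hy₃ (mul_nonneg hx₁ hx₂)
    have h1 : 4 * y₁ * y₂ * y₃ ≤ 4 * x₁ * x₂ * x₃ := by linarith
    have h2 : (x₁ + x₂ + x₃ - 1) ^ 2 ≤ (y₁ + y₂ + y₃ - 1) ^ 2 := by
      nlinarith
    linarith
end

section
/- Let U be a unitary on ℂ² and let |ψ_AB⟩ = C₁|η₁⟩⊗|χ₁⟩ + C₂|η₂⟩⊗|χ₂⟩ be any unit vector in ℂ² ⊗ ℂ^{d'} written in Schmidt form (η₁ ⊥ η₂, χ₁ ⊥ χ₂, |C₁|² + |C₂|² = 1). Then |⟨ψ_AB|(U ⊗ I)|ψ_AB⟩|² ≥ |Tr(U)|²/4. -/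
/-!
Writing `ψ = ∑ C_w η_w ⊗ χ_w`, orthonormality of the `χ_w` collapses `⟨ψ|(U ⊗ I)|ψ⟩` to
`|C₀|² V₀₀ + |C₁|² V₁₁`, where `V = M† U M` is `U` in the orthonormal basis `η` (the columns of
the unitary `M`). Then `V` is unitary with `Tr V = Tr U`, and for a 2×2 unitary the diagonal
entries have equal modulus. For `‖a‖ = ‖b‖` the vectors `a + b` and `a - b` are orthogonal,
so by Pythagoras every affine combination `s a + t b` is at least as long as the midpoint.
-/

open Matrix Kronecker Complex

section

variable {R m n ι : Type*} [CommRing R] [StarRing R] [Fintype m] [Fintype n]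

theorem star_dotProduct_kronecker_one_mulVec_tensor [DecidableEq n] (U : Matrix m m R)
    (e e' : m → R) (f f' : n → R) :
    star (fun p : m × n => e p.1 * f p.2) ⬝ᵥ
        (U ⊗ₖ (1 : Matrix n n R)) *ᵥ (fun p => e' p.1 * f' p.2)
      = (star e ⬝ᵥ U *ᵥ e') * (star f ⬝ᵥ f') := by
  simp only [dotProduct, mulVec, Fintype.sum_prod_type, kroneckerMap_apply, one_apply,
    mul_ite, mul_one, mul_zero, ite_mul, zero_mul, Finset.sum_ite_eq, Finset.mem_univ, if_true,
    Pi.star_apply, star_mul', Finset.sum_mul_sum]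
  refine Finset.sum_congr rfl fun i _ => Finset.sum_congr rfl fun k _ => ?_
  rw [Finset.mul_sum, Finset.mul_sum, Finset.sum_mul]
  exact Finset.sum_congr rfl fun j _ => by ring

theorem star_dotProduct_kronecker_one_mulVec_schmidt [Fintype ι] [DecidableEq ι] [DecidableEq n]
    (U : Matrix m m R) (η : ι → m → R) (χ : ι → n → R) (C : ι → R)
    (hχ : ∀ i j, star (χ i) ⬝ᵥ χ j = if i = j then 1 else 0) :
    star (fun p : m × n => ∑ w, C w * η w p.1 * χ w p.2) ⬝ᵥ
        (U ⊗ₖ (1 : Matrix n n R)) *ᵥ (fun p => ∑ w, C w * η w p.1 * χ w p.2)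
      = ∑ w, star (C w) * C w * (star (η w) ⬝ᵥ U *ᵥ η w) := by
  have hψ : (fun p : m × n => ∑ w, C w * η w p.1 * χ w p.2) =
      ∑ w, C w • fun p : m × n => η w p.1 * χ w p.2 := by
    ext p
    simp [Finset.sum_apply, mul_assoc]
  simp only [hψ, star_sum, star_smul, sum_dotProduct, mulVec_sum, dotProduct_sum, mulVec_smul,
    smul_dotProduct, dotProduct_smul, star_dotProduct_kronecker_one_mulVec_tensor, hχ,
    smul_eq_mul, mul_ite, mul_one, mul_zero, Finset.sum_ite_eq', Finset.mem_univ, if_true]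
  exact Finset.sum_congr rfl fun w _ => by ring

theorem conjTranspose_mul_mul_apply_eq_star_dotProduct_mulVec (U : Matrix m m R)
    (η : ι → m → R) (v w : ι) :
    ((of η)ᵀᴴ * U * (of η)ᵀ) v w = star (η v) ⬝ᵥ U *ᵥ η w := by
  simp only [mul_apply, conjTranspose_apply, transpose_apply, of_apply, dotProduct, mulVec,
    Pi.star_apply, Finset.sum_mul, Finset.mul_sum]
  rw [Finset.sum_comm]
  exact Finset.sum_congr rfl fun i _ => Finset.sum_congr rfl fun j _ => by ring

theorem transpose_of_mem_unitaryGroup [DecidableEq m] (η : m → m → R)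
    (hη : ∀ i j, star (η i) ⬝ᵥ η j = if i = j then 1 else 0) :
    (of η)ᵀ ∈ unitaryGroup m R := by
  rw [mem_unitaryGroup_iff']
  ext i j
  simpa [star_eq_conjTranspose, mul_apply, dotProduct, one_apply] using hη i j

theorem trace_conjTranspose_mul_mul_of_mem_unitaryGroup [DecidableEq m] {M : Matrix m m R}
    (hM : M ∈ unitaryGroup m R) (U : Matrix m m R) : (Mᴴ * U * M).trace = U.trace := by
  rw [trace_mul_cycle, ← star_eq_conjTranspose, mem_unitaryGroup_iff.mp hM, Matrix.one_mul]

end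

theorem norm_apply_zero_zero_eq_norm_apply_one_one_of_mem_unitaryGroup {𝕜 : Type*} [RCLike 𝕜]
    {V : Matrix (Fin 2) (Fin 2) 𝕜} (hV : V ∈ unitaryGroup (Fin 2) 𝕜) : ‖V 0 0‖ = ‖V 1 1‖ := by
  have col : (star V * V) 0 0 = 1 := by rw [mem_unitaryGroup_iff'.mp hV, one_apply_eq]
  have row : (V * star V) 1 1 = 1 := by rw [mem_unitaryGroup_iff.mp hV, one_apply_eq]
  simp only [star_eq_conjTranspose, mul_apply, conjTranspose_apply, Fin.sum_univ_two,
    RCLike.star_def, RCLike.conj_mul, RCLike.mul_conj] at col row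
  have hsq : ‖V 0 0‖ ^ 2 = ‖V 1 1‖ ^ 2 := by
    have h := col.trans row.symm
    norm_cast at h
    linarith
  exact (pow_left_inj₀ (norm_nonneg _) (norm_nonneg _) two_ne_zero).mp hsq

open scoped InnerProductSpace in
theorem norm_add_le_two_mul_norm_smul_add_smul_of_norm_eq {E : Type*} [NormedAddCommGroup E]
    [InnerProductSpace ℝ E] {a b : E} (hab : ‖a‖ = ‖b‖) {s t : ℝ} (hst : s + t = 1) :
    ‖a + b‖ ≤ 2 * ‖s • a + t • b‖ := by
  have hperp : ⟪a + b, (s - t) • (a - b)⟫_ℝ = 0 := by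
    rw [real_inner_smul_right, (real_inner_add_sub_eq_zero_iff a b).mpr hab, mul_zero]
  have hsplit : (2 : ℝ) • (s • a + t • b) = (a + b) + (s - t) • (a - b) := by
    obtain rfl : t = 1 - s := by linarith
    module
  rw [← abs_two, ← Real.norm_eq_abs, ← norm_smul, hsplit,
    mul_self_le_mul_self_iff (norm_nonneg _) (norm_nonneg _),
    norm_add_sq_eq_norm_sq_add_norm_sq_real hperp]
  exact le_add_of_nonneg_right (mul_self_nonneg _)

theorem entangled_probe_overlap_lower_bound (d' : ℕ)
    (U : Matrix (Fin 2) (Fin 2) ℂ) (hU : U ∈ Matrix.unitaryGroup (Fin 2) ℂ)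
    (η : Fin 2 → Fin 2 → ℂ) (χ : Fin 2 → Fin d' → ℂ) (C : Fin 2 → ℂ)
    (hη : ∀ i j, star (η i) ⬝ᵥ η j = if i = j then 1 else 0)
    (hχ : ∀ i j, star (χ i) ⬝ᵥ χ j = if i = j then 1 else 0)
    (hC : ∑ w, ‖C w‖ ^ 2 = 1) :
    let ψ : Fin 2 × Fin d' → ℂ := fun p => ∑ w, C w * η w p.1 * χ w p.2
    ‖U.trace‖ ^ 2 / 4 ≤
      ‖star ψ ⬝ᵥ ((U ⊗ₖ (1 : Matrix (Fin d') (Fin d') ℂ)).mulVec ψ)‖ ^ 2 := by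
  dsimp only
  have hM := transpose_of_mem_unitaryGroup η hη
  set V := ((of η)ᵀ)ᴴ * U * (of η)ᵀ
  have hV : V ∈ unitaryGroup (Fin 2) ℂ := mul_mem (mul_mem (Unitary.star_mem hM) hU) hM
  have hdiag (w : Fin 2) : star (η w) ⬝ᵥ U *ᵥ η w = V w w :=
    (conjTranspose_mul_mul_apply_eq_star_dotProduct_mulVec U η w w).symm
  have hweight (w : Fin 2) : star (C w) * C w = (‖C w‖ ^ 2 : ℝ) := by
    rw [RCLike.star_def, RCLike.conj_mul, Complex.ofReal_pow]; rfl
  have hweights : ‖C 0‖ ^ 2 + ‖C 1‖ ^ 2 = 1 := by simpa [Fin.sum_univ_two] using hC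
  rw [star_dotProduct_kronecker_one_mulVec_schmidt U η χ C hχ, Fin.sum_univ_two, hdiag, hdiag,
    hweight, hweight, ← Complex.real_smul, ← Complex.real_smul,
    ← trace_conjTranspose_mul_mul_of_mem_unitaryGroup hM U, trace_fin_two]
  have hmid := norm_add_le_two_mul_norm_smul_add_smul_of_norm_eq
    (norm_apply_zero_zero_eq_norm_apply_one_one_of_mem_unitaryGroup hV) hweights
  calc ‖V 0 0 + V 1 1‖ ^ 2 / 4
      ≤ (2 * ‖‖C 0‖ ^ 2 • V 0 0 + ‖C 1‖ ^ 2 • V 1 1‖) ^ 2 / 4 := by gcongr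
    _ = ‖‖C 0‖ ^ 2 • V 0 0 + ‖C 1‖ ^ 2 • V 1 1‖ ^ 2 := by ring
end

section
/- Let A₁, A₂, A₃ be 2×2 unitary matrices. For i ≠ j, set m_{ij} = |Tr(Aᵢ†Aⱼ)|²/4. Suppose there exists a unit vector |τ⟩ ∈ ℂ² ⊗ ℂ² such that g₁ = |⟨τ|(A₁†A₂ ⊗ I)|τ⟩|², g₂ = |⟨τ|(A₂†A₃ ⊗ I)|τ⟩|², g₃ = |⟨τ|(A₃†A₁ ⊗ I)|τ⟩|² satisfy g₁+g₂+g₃ < 1 and (g₁+g₂+g₃−1)² ≥ 4g₁g₂g₃. Then m₁ = m_{12}, m₂ = m_{23}, m₃ = m_{31} also satisfy m₁+m₂+m₃ < 1 and (m₁+m₂+m₃−1)² ≥ 4m₁m₂m₃. -/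
/-!
For a unitary `2 × 2` matrix `U`, Cayley–Hamilton gives `U + det U • Uᴴ = tr U • 1`. Pairing with
the reduced state `ρ` of the probe on the first qubit, and using that `ρ` is Hermitian of trace one,
this reads `tr U = z + det U • z̄` with `z = ⟨τ|(U ⊗ I)|τ⟩ = tr (U ρ)`, whence `|tr U| ≤ 2 |z|`.
So every overlap `mᵢ` of the maximally entangled probe is at most the corresponding `gᵢ`, and both
Caves–Fuchs–Schack conditions are preserved under decreasing the (nonnegative) overlaps.
-/

open Matrix Kronecker Complex

namespace Matrix

section Unitary

variable {R : Type*} [CommRing R]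

theorem add_adjugate_fin_two (A : Matrix (Fin 2) (Fin 2) R) : A + A.adjugate = A.trace • 1 := by
  rw [adjugate_fin_two, trace_fin_two]
  ext i j
  fin_cases i <;> fin_cases j <;> simp [add_comm]

variable [StarRing R]

theorem adjugate_eq_det_smul_conjTranspose {n : Type*} [Fintype n] [DecidableEq n]
    {U : Matrix n n R} (hU : U ∈ unitaryGroup n R) : U.adjugate = U.det • Uᴴ := by
  have hUU : Uᴴ * U = 1 := hU.1
  calc U.adjugate = Uᴴ * (U * U.adjugate) := by rw [← Matrix.mul_assoc, hUU, Matrix.one_mul]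
    _ = U.det • Uᴴ := by rw [mul_adjugate, Matrix.mul_smul, Matrix.mul_one]

theorem add_det_smul_conjTranspose_fin_two {U : Matrix (Fin 2) (Fin 2) R}
    (hU : U ∈ unitaryGroup (Fin 2) R) : U + U.det • Uᴴ = U.trace • 1 := by
  rw [← adjugate_eq_det_smul_conjTranspose hU, add_adjugate_fin_two]

theorem conjTranspose_mul_mem_unitaryGroup {n : Type*} [Fintype n] [DecidableEq n]
    {A B : Matrix n n R} (hA : A ∈ unitaryGroup n R) (hB : B ∈ unitaryGroup n R) :
    Aᴴ * B ∈ unitaryGroup n R :=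
  mul_mem (Unitary.star_mem hA) hB

end Unitary

theorem trace_conjTranspose_mul_of_isHermitian {R n : Type*} [CommSemiring R] [StarRing R]
    [Fintype n] (U : Matrix n n R) {ρ : Matrix n n R} (hρ : ρ.IsHermitian) :
    (Uᴴ * ρ).trace = star (U * ρ).trace := by
  rw [← trace_conjTranspose, conjTranspose_mul, hρ.eq, trace_mul_comm]

theorem norm_trace_le_two_mul_norm_trace_mul {𝕜 : Type*} [RCLike 𝕜]
    {U ρ : Matrix (Fin 2) (Fin 2) 𝕜} (hU : U ∈ unitaryGroup (Fin 2) 𝕜)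
    (hρ : ρ.IsHermitian) (hρ₁ : ρ.trace = 1) :
    ‖U.trace‖ ≤ 2 * ‖(U * ρ).trace‖ := by
  have key : U.trace = (U * ρ).trace + U.det * star (U * ρ).trace := by
    have := congrArg (fun M => (M * ρ).trace) (add_det_smul_conjTranspose_fin_two hU)
    simpa only [Matrix.add_mul, smul_mul, Matrix.one_mul, trace_add, trace_smul, hρ₁, smul_eq_mul,
      mul_one, trace_conjTranspose_mul_of_isHermitian U hρ] using this.symm
  have hdet : ‖U.det‖ = 1 := CStarRing.norm_of_mem_unitary (det_of_mem_unitary hU)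
  calc ‖U.trace‖ ≤ ‖(U * ρ).trace‖ + ‖U.det * star (U * ρ).trace‖ := key ▸ norm_add_le _ _
    _ = 2 * ‖(U * ρ).trace‖ := by rw [norm_mul, hdet, norm_star]; ring

end Matrix

section ReducedState

variable {R m n : Type*} [CommSemiring R] [StarRing R] [Fintype n]

/-- The reduced density matrix `Tr₂ |τ⟩⟨τ|` of a (not necessarily normalised) bipartite vector. -/
def reducedState (τ : m × n → R) : Matrix m m R :=
  of (Function.curry τ) * (of (Function.curry τ))ᴴ

theorem isHermitian_reducedState (τ : m × n → R) : (reducedState τ).IsHermitian :=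
  isHermitian_mul_conjTranspose_self _

variable [Fintype m]

theorem trace_reducedState (τ : m × n → R) : (reducedState τ).trace = star τ ⬝ᵥ τ := by
  rw [reducedState]
  set M := of (Function.curry τ)
  have hτ : τ = vec Mᵀ := rfl
  rw [hτ, star_vec_dotProduct_vec, conjTranspose_transpose_eq_transpose_conjTranspose,
    ← transpose_mul, trace_transpose]

theorem star_dotProduct_kronecker_one_mulVec [DecidableEq n] (U : Matrix m m R) (τ : m × n → R) :
    star τ ⬝ᵥ ((U ⊗ₖ (1 : Matrix n n R)) *ᵥ τ) = (U * reducedState τ).trace := by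
  rw [reducedState]
  set M := of (Function.curry τ)
  have hτ : τ = vec Mᵀ := rfl
  rw [hτ, kronecker_mulVec_vec, star_vec_dotProduct_vec, Matrix.one_mul,
    conjTranspose_transpose_eq_transpose_conjTranspose, ← Matrix.mul_assoc, ← transpose_mul,
    ← transpose_mul, trace_transpose, trace_mul_comm, Matrix.mul_assoc]

end ReducedState

theorem sq_norm_trace_div_four_le_sq_norm_overlap {𝕜 n : Type*} [RCLike 𝕜] [Fintype n]
    [DecidableEq n] {U : Matrix (Fin 2) (Fin 2) 𝕜} (hU : U ∈ unitaryGroup (Fin 2) 𝕜)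
    {τ : Fin 2 × n → 𝕜} (hτ : star τ ⬝ᵥ τ = 1) :
    ‖U.trace‖ ^ 2 / 4 ≤ ‖star τ ⬝ᵥ ((U ⊗ₖ (1 : Matrix n n 𝕜)) *ᵥ τ)‖ ^ 2 := by
  have h := norm_trace_le_two_mul_norm_trace_mul hU (isHermitian_reducedState τ)
    ((trace_reducedState τ).trans hτ)
  rw [star_dotProduct_kronecker_one_mulVec]
  nlinarith [norm_nonneg U.trace]

/-- The Caves–Fuchs–Schack conditions for antidistinguishability of three pure states with
pairwise squared overlaps `a`, `b`, `c`. -/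
def CavesFuchsSchack (a b c : ℝ) : Prop :=
  a + b + c < 1 ∧ (a + b + c - 1) ^ 2 ≥ 4 * a * b * c

theorem CavesFuchsSchack.of_le {a b c a' b' c' : ℝ} (h : CavesFuchsSchack a' b' c')
    (ha : 0 ≤ a) (hb : 0 ≤ b) (hc : 0 ≤ c) (haa : a ≤ a') (hbb : b ≤ b') (hcc : c ≤ c') :
    CavesFuchsSchack a b c := by
  obtain ⟨hsum, hcubic⟩ := h
  have hle : a + b + c ≤ a' + b' + c' := by linarith
  refine ⟨hle.trans_lt hsum, ?_⟩
  have ha' : 0 ≤ a' := ha.trans haa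
  have hb' : 0 ≤ b' := hb.trans hbb
  calc 4 * a * b * c ≤ 4 * a' * b' * c' := by gcongr
    _ ≤ (a' + b' + c' - 1) ^ 2 := hcubic
    _ ≤ (a + b + c - 1) ^ 2 := by nlinarith

theorem entangled_probe_implies_maxEntangled_probe
    (A₁ A₂ A₃ : Matrix (Fin 2) (Fin 2) ℂ)
    (hA₁ : A₁ ∈ Matrix.unitaryGroup (Fin 2) ℂ)
    (hA₂ : A₂ ∈ Matrix.unitaryGroup (Fin 2) ℂ)
    (hA₃ : A₃ ∈ Matrix.unitaryGroup (Fin 2) ℂ)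
    (τ : Fin 2 × Fin 2 → ℂ) (hτ : star τ ⬝ᵥ τ = 1) :
    let g₁ := ‖star τ ⬝ᵥ (((A₁ᴴ * A₂) ⊗ₖ (1 : Matrix (Fin 2) (Fin 2) ℂ)).mulVec τ)‖ ^ 2
    let g₂ := ‖star τ ⬝ᵥ (((A₂ᴴ * A₃) ⊗ₖ (1 : Matrix (Fin 2) (Fin 2) ℂ)).mulVec τ)‖ ^ 2
    let g₃ := ‖star τ ⬝ᵥ (((A₃ᴴ * A₁) ⊗ₖ (1 : Matrix (Fin 2) (Fin 2) ℂ)).mulVec τ)‖ ^ 2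
    let m₁ := ‖(A₁ᴴ * A₂).trace‖ ^ 2 / 4
    let m₂ := ‖(A₂ᴴ * A₃).trace‖ ^ 2 / 4
    let m₃ := ‖(A₃ᴴ * A₁).trace‖ ^ 2 / 4
    g₁ + g₂ + g₃ < 1 → (g₁ + g₂ + g₃ - 1) ^ 2 ≥ 4 * g₁ * g₂ * g₃ →
      m₁ + m₂ + m₃ < 1 ∧ (m₁ + m₂ + m₃ - 1) ^ 2 ≥ 4 * m₁ * m₂ * m₃ := by
  intro g₁ g₂ g₃ m₁ m₂ m₃ hsum hcubic
  have hg : CavesFuchsSchack g₁ g₂ g₃ := ⟨hsum, hcubic⟩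
  exact hg.of_le (by positivity) (by positivity) (by positivity)
    (sq_norm_trace_div_four_le_sq_norm_overlap (conjTranspose_mul_mem_unitaryGroup hA₁ hA₂) hτ)
    (sq_norm_trace_div_four_le_sq_norm_overlap (conjTranspose_mul_mem_unitaryGroup hA₂ hA₃) hτ)
    (sq_norm_trace_div_four_le_sq_norm_overlap (conjTranspose_mul_mem_unitaryGroup hA₃ hA₁) hτ)
end

section
/- The four states |00⟩, |0+⟩, |+0⟩, |++⟩ in ℂ² ⊗ ℂ² (where |+⟩ = (|0⟩+|1⟩)/√2) are perfectly antidistinguishable: there exists a POVM {M₁, M₂, M₃, M₄} on ℂ⁴ (Mₖ ⪰ 0, ΣMₖ = I) such that ⟨00|M₁|00⟩ = ⟨0+|M₂|0+⟩ = ⟨+0|M₃|+0⟩ = ⟨++|M₄|++⟩ = 0. -/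
open Matrix Complex
open scoped ComplexOrder

noncomputable def pbrA : ℂ := (((Real.sqrt 2 : ℝ) : ℂ))⁻¹

lemma pbrA_conj : (starRingEnd ℂ) pbrA = pbrA := by
  simp [pbrA, ← Complex.ofReal_inv]

lemma pbrA_sq : pbrA * pbrA = 2⁻¹ := by
  rw [pbrA, ← mul_inv, ← Complex.ofReal_mul, Real.mul_self_sqrt (by norm_num)]
  norm_num

lemma pbrA_pow : pbrA ^ 2 = 2⁻¹ := by rw [pow_two, pbrA_sq]

noncomputable def pbrVec : Fin 4 → Fin 2 × Fin 2 → ℂ := fun k p =>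
  ![![![0, pbrA], ![pbrA, 0]],
    ![![1/2, -(1/2)], ![1/2, 1/2]],
    ![![1/2, 1/2], ![-(1/2), 1/2]],
    ![![pbrA, 0], ![0, -pbrA]]] k p.1 p.2

theorem pbr_states_antidistinguishable :
    let e0 : Fin 2 → ℂ := fun j => if j = 0 then 1 else 0
    let ep : Fin 2 → ℂ := fun _ => ((Real.sqrt 2 : ℝ) : ℂ)⁻¹
    let ψ : Fin 4 → (Fin 2 × Fin 2 → ℂ) := fun k p =>
      if k = 0 then e0 p.1 * e0 p.2
      else if k = 1 then e0 p.1 * ep p.2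
      else if k = 2 then ep p.1 * e0 p.2
      else ep p.1 * ep p.2
    ∃ M : Fin 4 → Matrix (Fin 2 × Fin 2) (Fin 2 × Fin 2) ℂ,
      (∀ k, (M k).PosSemidef) ∧ (∑ k, M k) = 1 ∧
      ∀ k, star (ψ k) ⬝ᵥ ((M k).mulVec (ψ k)) = 0 := by
  intro e0 ep ψ
  refine ⟨fun k => Matrix.of fun i j => pbrVec k i * (starRingEnd ℂ) (pbrVec k j), ?_, ?_, ?_⟩
  · intro k
    show (Matrix.of fun i j => pbrVec k i * (starRingEnd ℂ) (pbrVec k j)).PosSemidef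
    have h : (Matrix.of fun i j => pbrVec k i * (starRingEnd ℂ) (pbrVec k j))
        = (Matrix.of fun i (_ : Fin 1) => pbrVec k i) *
          (Matrix.of fun i (_ : Fin 1) => pbrVec k i)ᴴ := by
      ext i j
      simp [Matrix.mul_apply]
    rw [h]
    exact Matrix.posSemidef_self_mul_conjTranspose _
  · ext ⟨i₁, i₂⟩ ⟨j₁, j₂⟩
    simp only [Finset.sum_apply, Matrix.sum_apply, Matrix.of_apply, Fin.sum_univ_four]
    fin_cases i₁ <;> fin_cases i₂ <;> fin_cases j₁ <;> fin_cases j₂ <;>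
      simp [pbrVec, pbrA_conj, Matrix.one_apply, Prod.ext_iff] <;>
      ring_nf <;> simp [pbrA_pow, pbrA_sq, map_ofNat] <;> norm_num
  · intro k
    simp only [dotProduct, Matrix.mulVec, Pi.star_apply, Matrix.of_apply,
      Fintype.sum_prod_type, Fin.sum_univ_two]
    fin_cases k <;>
      simp [ψ, e0, ep, pbrVec, pbrA, ← Complex.ofReal_inv]
end
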